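/- For every hash sequence of n cars on m places with 1 ≤ n < m, and every k ∈ {1,…,m−1}: the place V + k (taken modulo m) is empty at the end of the parking process if and only if −C has a strict record at V + k, i.e. if and only if C_{V+k} < C_{V+j} for every j with 0 ≤ j ≤ k−1. -/

import Mathlib

open MeasureTheory Filter
open scoped BigOperators

attribute [local instance] Classical.propDecidable

namespace Parking

variable {m : ℕ}

/-- Final parking spot of a car whose first try is place `s`, given the set `occ`
of currently occupied places (places are cyclic, i.e. elements of `ZMod m`). -/
noncomputable def spot (occ : Finset (ZMod m)) (s : ZMod m) : ZMod m :=
  if h : ∃ t : ℕ, s + (t : ZMod m) ∉ occ then s + ((Nat.find h : ℕ) : ZMod m) else s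

/-- Set of occupied places after the first `k` cars of the hash sequence `p` have parked. -/
noncomputable def occs (p : ℕ → ZMod m) : ℕ → Finset (ZMod m)
  | 0 => ∅
  | k + 1 => insert (spot (occs p k) (p k)) (occs p k)

/-- Number of consecutive occupied places starting at `x` (0 if `x` is empty). -/
noncomputable def runLen (occ : Finset (ZMod m)) (x : ZMod m) : ℕ :=
  if h : ∃ t : ℕ, x + (t : ZMod m) ∉ occ then Nat.find h else 0

/-- First place of the block of consecutive occupied places containing `x`. -/
noncomputable def blockStart (occ : Finset (ZMod m)) (x : ZMod m) : ZMod m :=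
  if h : ∃ t : ℕ, x - ((t : ZMod m) + 1) ∉ occ then x - ((Nat.find h : ℕ) : ZMod m) else x

/-- Starting places of the blocks of consecutive occupied places. -/
noncomputable def blockStarts (occ : Finset (ZMod m)) : Finset (ZMod m) :=
  occ.filter (fun x => x - 1 ∉ occ)

/-- The multiset of sizes of the blocks of consecutive occupied places. -/
noncomputable def blockSizes (occ : Finset (ZMod m)) : Multiset ℕ :=
  (blockStarts occ).val.map (runLen occ)

/-- `B n p k` : size of the `k`-th largest block (1-indexed, `0` if there are fewer
than `k` blocks) once the `n` first cars of the hash sequence `p` have parked. -/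
noncomputable def B (n : ℕ) (p : ℕ → ZMod m) (k : ℕ) : ℕ :=
  ((Multiset.sort (blockSizes (occs p n)) (· ≤ ·)).reverse).getD (k - 1) 0

/-- `R n p k` : size of the `k`-th block (1-indexed, `0` if there are fewer than `k`
blocks), blocks being sorted by increasing date of birth (increasing order of the first
arrival of a car of the block), once the `n` first cars of `p` have parked. -/
noncomputable def R (n : ℕ) (p : ℕ → ZMod m) (k : ℕ) : ℕ :=
  (((((List.range n).map
        (fun i => blockStart (occs p n) (spot (occs p i) (p i)))).reverse.dedup).reverse).map
      (runLen (occs p n))).getD (k - 1) 0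

/-- Number of places tried by car `i` beyond its first try. -/
noncomputable def offs (p : ℕ → ZMod m) (i : ℕ) : ℕ :=
  if h : ∃ t : ℕ, p i + (t : ZMod m) ∉ occs p i then Nat.find h else 0

/-- `H n p y` : number of cars among the `n` first cars of `p` that tried place `y`,
successfully or not. -/
noncomputable def H (n : ℕ) (p : ℕ → ZMod m) (y : ZMod m) : ℕ :=
  ((Finset.range n).filter (fun i => ∃ t : ℕ, t ≤ offs p i ∧ p i + (t : ZMod m) = y)).card

/-- `Y n p k` : number of cars whose first try is place `k` (periodic in `k`). -/
noncomputable def Y (n : ℕ) (p : ℕ → ZMod m) (k : ℤ) : ℕ :=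
  ((Finset.range n).filter (fun i => p i = (k : ZMod m))).card

/-- `A n p k = Y₁ + ⋯ + Y_k - k n / m`. -/
noncomputable def A (n : ℕ) (p : ℕ → ZMod m) (k : ℕ) : ℝ :=
  (∑ j ∈ Finset.range k, (Y n p (j + 1) : ℝ)) - (k : ℝ) * n / m

/-- `V n p` : the smallest `j ∈ {1, …, m}` at which `A` attains its minimum over `{1, …, m}`. -/
noncomputable def V (n : ℕ) (p : ℕ → ZMod m) : ℕ :=
  sInf {j | 1 ≤ j ∧ j ≤ m ∧ ∀ i, 1 ≤ i → i ≤ m → A n p j ≤ A n p i}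

/-- `C n p k = Y₁ + ⋯ + Y_k - k` for `0 ≤ k ≤ m`, extended to `ℤ` by `C (k + m) = C k - ℓ`. -/
noncomputable def C (n : ℕ) (p : ℕ → ZMod m) (k : ℤ) : ℤ :=
  ((∑ j ∈ Finset.range (k.emod m).toNat, (Y n p (j + 1) : ℤ)) - ((k.emod m).toNat : ℤ))
    - k.ediv m * ((m : ℤ) - (n : ℤ))

/-- Extension of a hash sequence `Fin n → Fin m` to a map `ℕ → ZMod m`. -/
def ext (m n : ℕ) (p : Fin n → Fin m) : ℕ → ZMod m :=
  fun i => if h : i < n then (((p ⟨i, h⟩) : ℕ) : ZMod m) else 0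

/-- Probability of an event under the uniform distribution on the `m ^ n` hash sequences. -/
noncomputable def parkProb (m n : ℕ) (ev : (ℕ → ZMod m) → Prop) : ℝ :=
  ((Finset.univ.filter (fun p : Fin n → Fin m => ev (ext m n p))).card : ℝ) / (m : ℝ) ^ n

/-- Expectation of a random variable under the uniform distribution on hash sequences. -/
noncomputable def parkExp (m n : ℕ) (X : (ℕ → ZMod m) → ℝ) : ℝ :=
  (∑ p : Fin n → Fin m, X (ext m n p)) / (m : ℝ) ^ n

/-- `φ(M,N,K) = binom(N−1,K−1) (K+1)^{K−1} M (M−K−1)^{N−K−1} (M−N−1) / M^N`. -/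
noncomputable def phi (M N K : ℕ) : ℝ :=
  (Nat.choose (N - 1) (K - 1) : ℝ) * ((K : ℝ) + 1) ^ (K - 1) * (M : ℝ)
      * ((M - K - 1 : ℕ) : ℝ) ^ (N - K - 1) * ((M - N - 1 : ℕ) : ℝ) / (M : ℝ) ^ N

/-- The density `f(λ,x) = (λ/√(2π)) x^{−1/2} (1−x)^{−3/2} exp(−λ²x/(2(1−x)))` on `(0,1)`. -/
noncomputable def fdens (l x : ℝ) : ℝ :=
  if 0 < x ∧ x < 1 then
    l / Real.sqrt (2 * Real.pi) * x ^ (-(1 : ℝ) / 2) * (1 - x) ^ (-(3 : ℝ) / 2)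
      * Real.exp (-(l ^ 2 * x) / (2 * (1 - x)))
  else 0

end Parking

/-!
The number of cars trying a place obeys Lindley's queueing recursion
`H_{y+1} = Y_{y+1} + (H_y - 1)⁺`: the cars trying `y + 1` are those hashed to it and those that
tried `y` without parking there, and exactly one car parks at `y` when `H_y > 0`. As
`C_{y+1} - C_y = Y_{y+1} - 1`, unrolling the recursion from an empty place `w` gives
`H_{w+k} = max (0, max_{j<k} (C_{w+k} - C_{w+j} + 1))`, so `w + k` is empty iff
`C_{w+k} < C_{w+j}` for all `j < k`.

It remains to see that `V` is empty. The function `x ↦ C_x + x ℓ / m` is `m`-periodic and agrees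
with `A` on `{1, …, m}`, so it is minimal at `V`; hence `C_V - C_i ≤ (i - V) ℓ / m < 0` for all
`i < V`, and the criterion applied from an empty place below `V` shows that `V` is empty.
-/

open Finset

section Lindley

variable {h : ℕ → ℕ} {c : ℕ → ℤ}

theorem lindley_sub_add_one_le
    (hstep : ∀ k, (h (k + 1) : ℤ) = c (k + 1) - c k + 1 + (h k - 1 : ℕ))
    {k j : ℕ} (hj : j < k) : c k - c j + 1 ≤ h k := by
  induction k with
  | zero => omega
  | succ k ih =>
    have := hstep k
    rcases Nat.lt_succ_iff_lt_or_eq.mp hj with hj | rfl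
    · have := ih hj
      omega
    · omega

theorem lindley_exists_le_sub_add_one
    (hstep : ∀ k, (h (k + 1) : ℤ) = c (k + 1) - c k + 1 + (h k - 1 : ℕ))
    (h0 : h 0 = 0) {k : ℕ} (hk : 0 < h k) :
    ∃ j < k, h k ≤ c k - c j + 1 := by
  induction k with
  | zero => omega
  | succ k ih =>
    have := hstep k
    rcases Nat.eq_zero_or_pos (h k) with hk0 | hkpos
    · exact ⟨k, k.lt_succ_self, by omega⟩
    · obtain ⟨j, hj, hle⟩ := ih hkpos
      exact ⟨j, hj.trans k.lt_succ_self, by omega⟩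

theorem lindley_eq_zero_iff
    (hstep : ∀ k, (h (k + 1) : ℤ) = c (k + 1) - c k + 1 + (h k - 1 : ℕ))
    (h0 : h 0 = 0) (k : ℕ) : h k = 0 ↔ ∀ j < k, c k < c j := by
  refine ⟨fun hk j hj => ?_, fun hrec => ?_⟩
  · have := lindley_sub_add_one_le hstep hj
    omega
  · by_contra hk
    obtain ⟨j, hj, hle⟩ := lindley_exists_le_sub_add_one hstep h0 (Nat.pos_of_ne_zero hk)
    have := hrec j hj
    omega

end Lindley

namespace Parking

variable {m : ℕ}

theorem add_natCast_inj {s : ZMod m} {a b : ℕ} (ha : a < m) (hb : b < m) :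
    s + a = s + b ↔ a = b := by
  rw [add_right_inj, ZMod.natCast_eq_natCast_iff', Nat.mod_eq_of_lt ha, Nat.mod_eq_of_lt hb]

theorem exists_add_natCast_notMem {occ : Finset (ZMod m)} (h : #occ < m) (s : ZMod m) :
    ∃ t : ℕ, s + t ∉ occ := by
  have : NeZero m := ⟨by omega⟩
  obtain ⟨e, -, he⟩ := exists_mem_notMem_of_card_lt_card (s := occ) (t := univ)
    (by rwa [card_univ, ZMod.card])
  exact ⟨(e - s).val, by simpa using he⟩

theorem spot_occs_eq_add_offs (p : ℕ → ZMod m) (i : ℕ) :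
    spot (occs p i) (p i) = p i + offs p i := by
  unfold spot offs
  split_ifs <;> simp

theorem occs_succ (p : ℕ → ZMod m) (k : ℕ) :
    occs p (k + 1) = insert (p k + offs p k) (occs p k) := by
  rw [occs, spot_occs_eq_add_offs]

theorem occs_eq_image (p : ℕ → ZMod m) (k : ℕ) :
    occs p k = (range k).image (fun i => p i + offs p i) := by
  induction k with
  | zero => rfl
  | succ k ih => rw [occs_succ, ih, range_add_one, image_insert]

theorem occs_mono (p : ℕ → ZMod m) {i j : ℕ} (h : i ≤ j) : occs p i ⊆ occs p j := by
  simp only [occs_eq_image]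
  exact image_subset_image (range_subset_range.mpr h)

theorem add_offs_mem_occs (p : ℕ → ZMod m) {i k : ℕ} (h : i < k) : p i + offs p i ∈ occs p k :=
  occs_mono p h (by simp [occs_succ])

theorem add_offs_notMem_occs (p : ℕ → ZMod m) {i : ℕ} (h : #(occs p i) < m) :
    p i + offs p i ∉ occs p i := by
  have hgap := exists_add_natCast_notMem h (p i)
  rw [offs, dif_pos hgap]
  exact Nat.find_spec hgap

theorem add_natCast_mem_occs_of_lt_offs (p : ℕ → ZMod m) {i t : ℕ} (ht : t < offs p i) :
    p i + t ∈ occs p i := by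
  unfold offs at ht
  split_ifs at ht with hgap
  · exact not_not.mp (Nat.find_min hgap ht)
  · omega

theorem card_occs (p : ℕ → ZMod m) {k : ℕ} (hk : k ≤ m) : #(occs p k) = k := by
  induction k with
  | zero => rfl
  | succ k ih =>
    rw [occs_succ, card_insert_of_notMem (add_offs_notMem_occs p (by omega)), ih (by omega)]

theorem injOn_add_offs (p : ℕ → ZMod m) {n : ℕ} (hn : n ≤ m) :
    Set.InjOn (fun i => p i + offs p i) (range n) := by
  rw [← card_image_iff, ← occs_eq_image, card_occs p hn, card_range]

theorem offs_le (p : ℕ → ZMod m) {i : ℕ} (hi : i < m) : offs p i ≤ i := by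
  by_contra! hlt
  have hsub : (range (i + 1)).image (fun t : ℕ => p i + t) ⊆ occs p i := by
    simp only [subset_iff, mem_image, mem_range]
    rintro _ ⟨t, ht, rfl⟩
    exact add_natCast_mem_occs_of_lt_offs p (by omega)
  have hinj : Set.InjOn (fun t : ℕ => p i + t) (range (i + 1)) := fun a ha b hb hab =>
    (add_natCast_inj (by simp at ha; omega) (by simp at hb; omega)).mp hab
  have := card_le_card hsub
  rw [card_image_of_injOn hinj, card_range, card_occs p hi.le] at this
  omega

abbrev Tries (p : ℕ → ZMod m) (i : ℕ) (y : ZMod m) : Prop :=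
  ∃ t : ℕ, t ≤ offs p i ∧ p i + t = y

section Tries

variable {n : ℕ} (p : ℕ → ZMod m)

theorem H_eq_card_tries (y : ZMod m) : H n p y = #{i ∈ range n | Tries p i y} := rfl

theorem tries_add_offs (i : ℕ) : Tries p i (p i + offs p i) := ⟨_, le_rfl, rfl⟩

theorem Tries.mem_occs {p : ℕ → ZMod m} {i : ℕ} {y : ZMod m} (h : Tries p i y)
    (hi : i < n) : y ∈ occs p n := by
  obtain ⟨t, ht, rfl⟩ := h
  rcases ht.lt_or_eq with ht | rfl
  · exact occs_mono p hi.le (add_natCast_mem_occs_of_lt_offs p ht)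
  · exact add_offs_mem_occs p hi

theorem H_eq_zero_iff (y : ZMod m) : H n p y = 0 ↔ y ∉ occs p n := by
  rw [H_eq_card_tries, card_eq_zero, filter_eq_empty_iff]
  constructor
  · intro h hy
    rw [occs_eq_image] at hy
    obtain ⟨i, hi, rfl⟩ := mem_image.mp hy
    exact h hi (tries_add_offs p i)
  · intro h i hi hy
    exact h (hy.mem_occs (mem_range.mp hi))

theorem card_filter_add_offs_eq (hn : n ≤ m) (y : ZMod m) :
    #{i ∈ range n | p i + offs p i = y} = if y ∈ occs p n then 1 else 0 := by
  split_ifs with hy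
  · rw [occs_eq_image] at hy
    obtain ⟨i, hi, rfl⟩ := mem_image.mp hy
    refine le_antisymm (card_le_one.mpr fun a ha b hb => ?_) (card_pos.mpr ⟨i, by simp_all⟩)
    rw [mem_filter] at ha hb
    exact injOn_add_offs p hn ha.1 hb.1 (ha.2.trans hb.2.symm)
  · rw [card_eq_zero, filter_eq_empty_iff]
    rintro i hi rfl
    exact hy (add_offs_mem_occs p (mem_range.mp hi))

theorem tries_add_one_iff {i : ℕ} (hi : i + 1 < m) (y : ZMod m) :
    Tries p i (y + 1) ↔ p i = y + 1 ∨ (Tries p i y ∧ p i + offs p i ≠ y) := by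
  have hoffs := offs_le p (i := i) (by omega)
  constructor
  · rintro ⟨_ | t, ht, hy⟩
    · left
      simpa using hy
    · right
      have hty : p i + t = y := by
        push_cast at hy
        rw [← add_assoc] at hy
        exact add_right_cancel hy
      refine ⟨⟨t, by omega, hty⟩, fun hoy => ?_⟩
      have := (add_natCast_inj (by omega) (by omega)).mp (hoy.trans hty.symm)
      omega
  · rintro (hy | ⟨⟨t, ht, rfl⟩, hne⟩)
    · exact ⟨0, Nat.zero_le _, by simpa using hy⟩
    · have htlt : t < offs p i := ht.lt_of_ne (by rintro rfl; exact hne rfl)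
      exact ⟨t + 1, htlt, by push_cast; ring⟩

theorem not_tries_of_eq_add_one {i : ℕ} (hi : i + 1 < m) {y : ZMod m} (hy : p i = y + 1) :
    ¬ Tries p i y := by
  rintro ⟨t, ht, hty⟩
  have := offs_le p (i := i) (by omega)
  have hcycle : p i + ((t + 1 : ℕ) : ZMod m) = p i + ((0 : ℕ) : ZMod m) := by
    push_cast
    linear_combination hty - hy
  have := (add_natCast_inj (by omega) (by omega)).mp hcycle
  omega

theorem H_add_one (hnm : n < m) (y : ZMod m) :
    H n p (y + 1) = #{i ∈ range n | p i = y + 1} + (H n p y - 1) := by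
  have hsplit : {i ∈ range n | Tries p i (y + 1)}
      = {i ∈ range n | p i = y + 1} ∪ {i ∈ range n | Tries p i y ∧ p i + offs p i ≠ y} := by
    rw [← filter_or]
    exact filter_congr fun i hi => tries_add_one_iff p (by simp at hi; omega) y
  have hdisj : Disjoint {i ∈ range n | p i = y + 1}
      {i ∈ range n | Tries p i y ∧ p i + offs p i ≠ y} :=
    disjoint_filter.mpr fun i hi hy h =>
      not_tries_of_eq_add_one p (by simp at hi; omega) hy h.1
  have hparked : #{i ∈ range n | Tries p i y ∧ p i + offs p i = y}
      = if y ∈ occs p n then 1 else 0 := by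
    rw [← card_filter_add_offs_eq p hnm.le y]
    congr 1
    exact filter_congr fun i _ => ⟨And.right, fun h => ⟨h ▸ tries_add_offs p i, h⟩⟩
  have hcount : #{i ∈ range n | Tries p i y ∧ p i + offs p i = y}
      + #{i ∈ range n | Tries p i y ∧ p i + offs p i ≠ y} = H n p y := by
    rw [H_eq_card_tries, ← card_filter_add_card_filter_not (s := {i ∈ range n | Tries p i y})
      (fun i => p i + offs p i = y), filter_filter, filter_filter]
  rw [H_eq_card_tries p (y + 1), hsplit, card_union_of_disjoint hdisj]
  split_ifs at hparked with hy
  · omega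
  · have := (H_eq_zero_iff p y).mpr hy
    omega

end Tries

section Records

variable {n : ℕ} (p : ℕ → ZMod m)

theorem H_intCast_add_one (hnm : n < m) (a : ℤ) :
    H n p ((a + 1 : ℤ) : ZMod m) = Y n p (a + 1) + (H n p a - 1) := by
  simp only [Y, Int.cast_add, Int.cast_one]
  exact H_add_one p hnm _

theorem Y_add_mul (a q : ℤ) : Y n p (a + q * m) = Y n p a := by
  simp [Y]

theorem sum_range_Y [NeZero m] : ∑ j ∈ range m, (Y n p (j + 1) : ℤ) = n := by
  have hfib := card_eq_sum_card_fiberwise (s := range n) (t := range m)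
    (f := fun i : ℕ => (p i - 1).val) fun i _ => mem_range.mpr (ZMod.val_lt _)
  rw [card_range] at hfib
  calc ∑ j ∈ range m, (Y n p (j + 1) : ℤ)
      = ∑ j ∈ range m, (#{i ∈ range n | (p i - 1).val = j} : ℤ) := by
        refine sum_congr rfl fun j hj => ?_
        simp only [Y]
        congr 2
        ext i
        have hval : (p i - 1).val = j ↔ p i - 1 = j :=
          ⟨fun h => h ▸ (ZMod.natCast_zmod_val _).symm,
            fun h => h ▸ ZMod.val_natCast_of_lt (mem_range.mp hj)⟩
        rw [mem_filter, mem_filter, hval, sub_eq_iff_eq_add]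
        push_cast
        rfl
    _ = n := by exact_mod_cast hfib.symm

theorem C_eq (k : ℤ) : C n p k = ∑ j ∈ range (k % m).toNat, (Y n p (j + 1) : ℤ)
    - (k % m).toNat - k / m * (m - n) := rfl

theorem C_natCast_of_lt {r : ℕ} (hr : r < m) :
    C n p r = ∑ j ∈ range r, (Y n p (j + 1) : ℤ) - r := by
  rw [C_eq, Int.emod_eq_of_lt (by omega) (by omega), Int.ediv_eq_zero_of_lt (by omega) (by omega)]
  simp

theorem C_add_mul [NeZero m] (a q : ℤ) : C n p (a + q * m) = C n p a - q * (m - n) := by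
  rw [C_eq, C_eq, Int.add_mul_emod_self_right,
    Int.add_mul_ediv_right _ _ (by exact_mod_cast NeZero.ne m)]
  ring

theorem C_natCast_self [NeZero m] : C n p m = n - m := by
  have h := C_add_mul (n := n) p 0 1
  rw [zero_add, one_mul, ← Nat.cast_zero, C_natCast_of_lt p (Nat.pos_of_neZero m)] at h
  simpa using h

theorem C_add_one [NeZero m] (a : ℤ) : C n p (a + 1) = C n p a + Y n p (a + 1) - 1 := by
  have hm : 0 < m := Nat.pos_of_neZero m
  obtain ⟨r, q, hr, rfl⟩ : ∃ (r : ℕ) (q : ℤ), r < m ∧ a = r + q * m :=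
    have := Int.emod_nonneg a (b := m) (by omega)
    ⟨(a % m).toNat, a / m, by have := Int.emod_lt_of_pos a (b := m) (by omega); omega,
      by have := Int.emod_add_ediv_mul a m; omega⟩
  rw [show (r : ℤ) + q * m + 1 = (r + 1 : ℤ) + q * m by ring, C_add_mul, C_add_mul, Y_add_mul,
    C_natCast_of_lt p hr]
  rcases (Nat.succ_le_of_lt hr).lt_or_eq with hr1 | hr1
  · rw [← Nat.cast_add_one, C_natCast_of_lt p hr1, sum_range_succ]
    push_cast
    ring
  · obtain rfl : m = r + 1 := hr1.symm
    have hsum := sum_range_Y (n := n) p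
    rw [sum_range_succ] at hsum
    have hC := C_natCast_self (n := n) p
    push_cast at hsum hC ⊢
    rw [hC]
    linarith

theorem H_eq_zero_iff_forall_C_lt (hnm : n < m) {w : ℤ} (hw : H n p w = 0) (k : ℕ) :
    H n p ((w + k : ℤ) : ZMod m) = 0 ↔ ∀ j < k, C n p (w + k) < C n p (w + j) := by
  have : NeZero m := ⟨by omega⟩
  refine lindley_eq_zero_iff (h := fun k : ℕ => H n p ((w + k : ℤ) : ZMod m))
    (c := fun k : ℕ => C n p (w + k)) (fun k => ?_) (by simpa using hw) k
  simp only [Nat.cast_add_one, ← add_assoc, H_intCast_add_one p hnm, C_add_one]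
  push_cast
  ring

theorem A_eq [NeZero m] (k : ℕ) : A n p k = ((m * C n p k + k * (m - n) : ℤ) : ℝ) / m := by
  have hm : (m : ℝ) ≠ 0 := NeZero.ne _
  induction k with
  | zero => simp [A, C_eq]
  | succ k ih =>
    have hA : A n p (k + 1) = A n p k + Y n p (k + 1) - n / m := by
      simp only [A, sum_range_succ]
      push_cast
      ring
    rw [hA, ih, Nat.cast_add_one, C_add_one]
    field_simp
    push_cast
    ring

theorem A_le_A_iff [NeZero m] (a b : ℕ) :
    A n p a ≤ A n p b ↔ m * C n p a + a * (m - n) ≤ m * C n p b + b * (m - n) := by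
  rw [A_eq, A_eq, div_le_div_iff_of_pos_right (by simpa using Nat.pos_of_neZero m), Int.cast_le]

theorem V_spec (hm : 0 < m) :
    1 ≤ V n p ∧ V n p ≤ m ∧ ∀ i, 1 ≤ i → i ≤ m → A n p (V n p) ≤ A n p i := by
  obtain ⟨b, hb, hmin⟩ := exists_min_image (Icc 1 m) (A n p) ⟨1, mem_Icc.mpr ⟨le_rfl, hm⟩⟩
  rw [mem_Icc] at hb
  exact Nat.sInf_mem (s := {j | 1 ≤ j ∧ j ≤ m ∧ ∀ i, 1 ≤ i → i ≤ m → A n p j ≤ A n p i})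
    ⟨b, hb.1, hb.2, fun i hi1 him => hmin i (mem_Icc.mpr ⟨hi1, him⟩)⟩

theorem C_V_lt_of_lt (hnm : n < m) {i : ℤ} (hi : i < V n p) : C n p (V n p) < C n p i := by
  have : NeZero m := ⟨by omega⟩
  obtain ⟨-, -, hVmin⟩ := V_spec p (n := n) (by omega)
  obtain ⟨r, q, hr1, hrm, rfl⟩ : ∃ (r : ℕ) (q : ℤ), 1 ≤ r ∧ r ≤ m ∧ i = r + q * m := by
    have := Int.emod_nonneg (i - 1) (b := m) (by omega)
    have := Int.emod_lt_of_pos (i - 1) (b := m) (by omega)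
    have := Int.emod_add_ediv_mul (i - 1) m
    exact ⟨((i - 1) % m).toNat + 1, (i - 1) / m, by omega, by omega, by omega⟩
  have hmin := (A_le_A_iff p _ _).mp (hVmin r hr1 hrm)
  rw [C_add_mul]
  have hℓ : (0 : ℤ) < m - n := by omega
  nlinarith [mul_lt_mul_of_pos_right (show (r : ℤ) + q * m < V n p from hi) hℓ]

theorem H_V_eq_zero (hnm : n < m) : H n p ((V n p : ℤ) : ZMod m) = 0 := by
  have : NeZero m := ⟨by omega⟩
  obtain ⟨e, -, he⟩ := exists_mem_notMem_of_card_lt_card (s := occs p n) (t := univ)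
    (by rwa [card_univ, ZMod.card, card_occs p hnm.le])
  set k := ((V n p : ZMod m) - e).val
  have hw : ((V n p - k : ℤ) : ZMod m) = e := by simp [k]
  have hrec := H_eq_zero_iff_forall_C_lt p hnm (w := V n p - k)
    (by rw [hw]; exact (H_eq_zero_iff p e).mpr he) k
  simp only [sub_add_cancel] at hrec
  exact hrec.mpr fun j hj => C_V_lt_of_lt p hnm (by omega)

end Records

theorem place_empty_iff_record_general
    (m n : ℕ) (h2 : n < m) (p : ℕ → ZMod m)
    (k : ℕ) :
    H n p (((V n p + k : ℕ)) : ZMod m) = 0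
      ↔ ∀ j : ℕ, j < k → C n p ((V n p : ℤ) + k) < C n p ((V n p : ℤ) + j) := by
  rw [show ((V n p + k : ℕ) : ZMod m) = (((V n p : ℤ) + k : ℤ) : ZMod m) by push_cast; rfl]
  exact H_eq_zero_iff_forall_C_lt p h2 (H_V_eq_zero p h2) k

/-- The place `V + k` is empty at the end of the parking process if and only if `−C` has a
strict record at `V + k`, i.e. `C_{V+k} < C_{V+j}` for all `0 ≤ j ≤ k − 1`. -/
theorem place_empty_iff_record
    (m n : ℕ) (h1 : 1 ≤ n) (h2 : n < m) (p : ℕ → ZMod m)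
    (k : ℕ) (hk : k ∈ Finset.Icc 1 (m - 1)) :
    H n p (((V n p + k : ℕ)) : ZMod m) = 0
      ↔ ∀ j : ℕ, j < k → C n p ((V n p : ℤ) + k) < C n p ((V n p : ℤ) + j) :=
  place_empty_iff_record_general m n h2 p k

end Parking
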